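/- arXiv:2008.10661 — 10 statements merged into one kernel-verified Lean document; each statement's English description precedes it below -/
import Mathlib

section
/- There exists a unique formal power series u ∈ ℚ[[q,t]] satisfying u = −q·(1−u)·(t + (1−t)·u) (any such u necessarily has zero constant term). Moreover, for all integers n ≥ 1 and k ≥ 1 the coefficient of q^n t^k in u equals ((−1)^{n+k+1}/n)·C(n+k, k−1)·C(n, k), where C(·,·) denotes the usual binomial coefficient of natural numbers, and the coefficient of q^n t^k is 0 whenever n = 0 or k = 0. -/
/-- The coefficient of `q^n t^k` in a two-variable formal power series over `ℚ`,
where `q` is the variable of index `0` and `t` is the variable of index `1`. -/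
noncomputable def coeffQT (n k : ℕ) (u : MvPowerSeries (Fin 2) ℚ) : ℚ :=
  MvPowerSeries.coeff (Finsupp.single 0 n + Finsupp.single 1 k) u

/-!
Put `W = t + (1 - t) u`. Multiplying the equation by `1 - t` turns it into
`W = t + q W (W - 1)`, whose solution is `W = t (1 + q)⁻¹ c(q t (1 + q)⁻²)` with `c` the
Catalan series, `c = 1 + z c²`. Extracting coefficients gives
`[qⁿ tʲ⁺¹] W = Catⱼ (-1)ⁿ⁻ʲ binom(n + j, 2j)` for `j ≤ n` (and `0` otherwise), and the
claimed coefficients of `u` are exactly the ones whose differences in `t` reproduce these: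
that is a binomial identity. Uniqueness holds
because the difference of two solutions is annihilated by a series with constant term `1`.
The computation is done in `ℚ⟦q⟧⟦t⟧`, where `t` is the outer variable.
-/

open PowerSeries Nat

theorem MvPowerSeries.eq_of_eq_neg_X_mul_one_sub_mul {σ R : Type*} [CommRing R] (i j : σ)
    {u v : MvPowerSeries σ R} (hu : u = -X i * (1 - u) * (X j + (1 - X j) * u))
    (hv : v = -X i * (1 - v) * (X j + (1 - X j) * v)) : u = v := by
  have hunit : IsUnit (1 + X i * ((1 - 2 * X j) - (1 - X j) * (u + v))) := by
    simp [MvPowerSeries.isUnit_iff_constantCoeff]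
  rw [← sub_eq_zero, ← hunit.mul_left_eq_zero]
  linear_combination hu - hv

/-- `q = X 0` becomes the inner and `t = X 1` the outer variable. -/
def finTwoEquivOptionUnit : Fin 2 ≃ Option Unit where
  toFun := ![some (), none]
  invFun o := o.elim 1 fun _ => 0
  left_inv := by decide
  right_inv := by decide

section Iterated

variable (R : Type*) [CommSemiring R]

noncomputable def qtEquiv : MvPowerSeries (Fin 2) R ≃ₐ[R] R⟦X⟧⟦X⟧ :=
  (MvPowerSeries.renameEquiv R finTwoEquivOptionUnit).trans (MvPowerSeries.optionEquivLeft Unit R)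

@[simp]
theorem qtEquiv_X_zero : qtEquiv R (MvPowerSeries.X 0) = C X := by
  simp [qtEquiv, MvPowerSeries.renameEquiv, finTwoEquivOptionUnit]
  rfl

@[simp]
theorem qtEquiv_X_one : qtEquiv R (MvPowerSeries.X 1) = X := by
  simp [qtEquiv, MvPowerSeries.renameEquiv, finTwoEquivOptionUnit]

end Iterated

theorem coeff_coeff_qtEquiv (u : MvPowerSeries (Fin 2) ℚ) (n k : ℕ) :
    coeff n (coeff k (qtEquiv ℚ u)) = coeffQT n k u := by
  have hexp : (Finsupp.single () n).optionElim k =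
      (Finsupp.single (0 : Fin 2) n + Finsupp.single 1 k).embDomain
        finTwoEquivOptionUnit.toEmbedding := by
    ext (_ | _) <;> simp [finTwoEquivOptionUnit]
  rw [qtEquiv, AlgEquiv.trans_apply, coeff_def (s := Finsupp.single () n) (by simp),
    MvPowerSeries.coeff_coeff_optionEquivLeft, hexp]
  exact MvPowerSeries.coeff_embDomain_rename _ _ _

section InvOneAddX

variable {K : Type*} [Field K]

theorem inv_one_add_X_eq_rescale : (1 + X : K⟦X⟧)⁻¹ = rescale (-1) (mk 1) := by
  rw [eq_comm, eq_inv_iff_mul_eq_one (by simp)]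
  simpa [sub_eq_add_neg] using congrArg (rescale (-1 : K)) (mk_one_mul_one_sub_eq_one K)

theorem coeff_inv_one_add_X_pow (m n : ℕ) :
    coeff n ((1 + X : K⟦X⟧)⁻¹ ^ (m + 1)) = (-1) ^ n * (m + n).choose m := by
  rw [inv_one_add_X_eq_rescale, ← map_pow, mk_one_pow_eq_mk_choose_add, coeff_rescale, coeff_mk]

theorem one_add_X_mul_inv : (1 + X : K⟦X⟧) * (1 + X)⁻¹ = 1 :=
  PowerSeries.mul_inv_cancel _ (by simp)

end InvOneAddX

section RescaledCatalan

variable {R : Type*} [CommRing R]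

noncomputable def rescaledCatalan (a : R) : R⟦X⟧ :=
  rescale a (catalanSeries.map (Nat.castRingHom R))

theorem coeff_rescaledCatalan (a : R) (n : ℕ) :
    coeff n (rescaledCatalan a) = a ^ n * catalan n := by
  simp [rescaledCatalan, coeff_rescale]

theorem rescaledCatalan_sq_mul_add_one (a : R) :
    rescaledCatalan a ^ 2 * (C a * X) + 1 = rescaledCatalan a := by
  simpa [rescaledCatalan] using
    congrArg (fun f => rescale a (f.map (Nat.castRingHom R))) catalanSeries_sq_mul_X_add_one

end RescaledCatalan

theorem neg_one_pow_two_mul_add {M : Type*} [Monoid M] [HasDistribNeg M] (x y : ℕ) :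
    (-1 : M) ^ (2 * x + y) = (-1) ^ y := by
  rw [pow_add, pow_mul, neg_one_sq, one_pow, one_mul]

theorem cast_catalan_eq_factorial_div (m : ℕ) :
    (catalan m : ℚ) = (2 * m)! / (m ! * (m + 1)!) := by
  have h := congrArg (Nat.cast : ℕ → ℚ) (succ_mul_catalan_eq_centralBinom m)
  rw [Nat.centralBinom, two_mul, Nat.cast_add_choose, ← two_mul] at h
  rw [eq_div_iff (by positivity), Nat.factorial_succ]
  rw [eq_div_iff (by positivity)] at h
  push_cast at h ⊢
  linear_combination h

theorem choose_mul_choose_add_choose_mul_choose (a b : ℕ) :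
    (((a + 1) + (a + b + 3)).choose (a + 1) : ℚ) * ((a + 2) + b).choose (a + 2) +
        (a + (a + b + 3)).choose a * ((a + 1) + (b + 1)).choose (a + 1) =
      (a + b + 2) * catalan (a + 1) * ((2 * a + 2) + (b + 1)).choose (2 * a + 2) := by
  simp only [Nat.cast_add_choose, cast_catalan_eq_factorial_div]
  rw [show a + 1 + (a + b + 3) = (2 * a + b + 3) + 1 by ring,
    show a + (a + b + 3) = 2 * a + b + 3 by ring,
    show 2 * a + 2 + (b + 1) = 2 * a + b + 3 by ring,
    show a + 2 + b = a + b + 2 by ring, show a + 1 + (b + 1) = a + b + 2 by ring,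
    show 2 * (a + 1) = 2 * a + 2 by ring]
  simp only [Nat.factorial_succ]
  push_cast
  field_simp
  ring

/-- The series `t + (1 - t) u` for the solution `u`. -/
noncomputable def wSeries : ℚ⟦X⟧⟦X⟧ :=
  C (1 + X)⁻¹ * X * rescaledCatalan (X * (1 + X)⁻¹ ^ 2)

theorem wSeries_eq : wSeries = X + C X * wSeries * (wSeries - 1) := by
  have hZ := rescaledCatalan_sq_mul_add_one (X * (1 + X : ℚ⟦X⟧)⁻¹ ^ 2)
  have hinv := congrArg C (one_add_X_mul_inv (K := ℚ))
  rw [map_mul, map_one] at hinv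
  simp only [wSeries, map_mul, map_pow, map_add, map_one] at hZ hinv ⊢
  linear_combination (-X) * hZ + X * rescaledCatalan (X * (1 + X : ℚ⟦X⟧)⁻¹ ^ 2) * hinv

theorem constantCoeff_wSeries : constantCoeff wSeries = 0 := by
  simp [wSeries, mul_assoc, mul_left_comm _ X]

theorem coeff_coeff_succ_wSeries (n j : ℕ) :
    coeff n (coeff (j + 1) wSeries) =
      if j ≤ n then catalan j * (-1) ^ (n - j) * ((n + j).choose (2 * j) : ℚ) else 0 := by
  have hslice : coeff (j + 1) wSeries =
      C (catalan j : ℚ) * (X ^ j * (1 + X)⁻¹ ^ (2 * j + 1)) := by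
    rw [wSeries, mul_assoc, coeff_C_mul, coeff_succ_X_mul, coeff_rescaledCatalan,
      ← map_natCast (C (R := ℚ))]
    ring
  rw [hslice, coeff_C_mul, coeff_X_pow_mul']
  split_ifs with h
  · rw [coeff_inv_one_add_X_pow, show 2 * j + (n - j) = n + j by omega]
    ring
  · rw [mul_zero]

noncomputable def uCoeff (n k : ℕ) : ℚ :=
  if 1 ≤ n ∧ 1 ≤ k then (-1) ^ (n + k + 1) / n * (n + k).choose (k - 1) * n.choose k else 0

theorem uCoeff_succ_sub_uCoeff_of_lt {n j : ℕ} (hj : 1 ≤ j) (hjn : j < n) :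
    uCoeff n (j + 1) - uCoeff n j = catalan j * (-1) ^ (n - j) * (n + j).choose (2 * j) := by
  obtain ⟨a, rfl⟩ : ∃ a, j = a + 1 := ⟨j - 1, by omega⟩
  obtain ⟨b, rfl⟩ : ∃ b, n = a + b + 2 := ⟨n - a - 2, by omega⟩
  have e1 : (a + b + 2 + (a + 1 + 1)).choose (a + 1 + 1 - 1) =
      ((a + 1) + (a + b + 3)).choose (a + 1) := by
    congr 1; omega
  have e2 : (a + b + 2).choose (a + 1 + 1) = ((a + 2) + b).choose (a + 2) := by
    congr 1; omega
  have e3 : (a + b + 2 + (a + 1)).choose (a + 1 - 1) = (a + (a + b + 3)).choose a := by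
    congr 1; omega
  have e4 : (a + b + 2).choose (a + 1) = ((a + 1) + (b + 1)).choose (a + 1) := by
    congr 1; omega
  have e5 : (a + b + 2 + (a + 1)).choose (2 * (a + 1)) =
      ((2 * a + 2) + (b + 1)).choose (2 * a + 2) := by
    congr 1; omega
  rw [uCoeff, uCoeff, if_pos (by omega), if_pos (by omega), e1, e2, e3, e4, e5,
    show a + b + 2 + (a + 1 + 1) + 1 = 2 * (a + 2) + (b + 1) by omega,
    show a + b + 2 + (a + 1) + 1 = 2 * (a + 2) + b by omega,
    show a + b + 2 - (a + 1) = b + 1 by omega, neg_one_pow_two_mul_add, neg_one_pow_two_mul_add]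
  have hn : ((a + b + 2 : ℕ) : ℚ) ≠ 0 := by positivity
  field_simp
  push_cast at hn ⊢
  linear_combination (-1 : ℚ) ^ (b + 1) * choose_mul_choose_add_choose_mul_choose a b

theorem uCoeff_succ_self_sub {n : ℕ} (hn : 1 ≤ n) :
    uCoeff n (n + 1) - uCoeff n n = catalan n := by
  obtain ⟨a, rfl⟩ : ∃ a, n = a + 1 := ⟨n - 1, by omega⟩
  have e : (a + 1 + (a + 1)).choose (a + 1 - 1) = (a + (a + 2)).choose a := by
    congr 1; omega
  rw [uCoeff, uCoeff, if_pos (by omega), if_pos (by omega),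
    Nat.choose_eq_zero_of_lt (n := a + 1) (k := a + 1 + 1) (by omega),
    Nat.choose_self, e, show a + 1 + (a + 1) + 1 = 2 * (a + 1) + 1 by omega,
    neg_one_pow_two_mul_add, Nat.cast_add_choose, cast_catalan_eq_factorial_div,
    show a + (a + 2) = 2 * (a + 1) by omega]
  simp only [Nat.factorial_succ]
  push_cast
  field_simp
  ring

theorem uCoeff_succ_sub_uCoeff (n j : ℕ) :
    uCoeff n (j + 1) - uCoeff n j =
      (if j ≤ n then (catalan j : ℚ) * (-1) ^ (n - j) * (n + j).choose (2 * j) else 0) -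
        if n = 0 ∧ j = 0 then 1 else 0 := by
  rcases Nat.eq_zero_or_pos n with rfl | hn
  · rcases j with _ | j <;> simp [uCoeff]
  rw [if_neg (show ¬(n = 0 ∧ j = 0) by omega), sub_zero]
  rcases Nat.eq_zero_or_pos j with rfl | hj
  · have : (n : ℚ) ≠ 0 := by positivity
    simp [uCoeff, pow_succ, Nat.one_le_iff_ne_zero.mpr hn.ne', this]
  rcases lt_trichotomy j n with hjn | rfl | hnj
  · rw [if_pos hjn.le, uCoeff_succ_sub_uCoeff_of_lt hj hjn]
  · rw [if_pos le_rfl, uCoeff_succ_self_sub hn, Nat.sub_self, ← two_mul, Nat.choose_self]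
    simp
  · simp [uCoeff, Nat.choose_eq_zero_of_lt, hnj, Nat.lt_succ_of_lt hnj, hnj.not_ge]

noncomputable def uSeries : ℚ⟦X⟧⟦X⟧ := mk fun k => mk fun n => uCoeff n k

theorem one_sub_X_mul_uSeries : (1 - X) * uSeries = wSeries - X := by
  ext k n
  rcases k with _ | j
  · simp [uSeries, uCoeff, constantCoeff_wSeries]
  · rw [sub_mul, one_mul, map_sub, coeff_succ_X_mul, map_sub, map_sub, map_sub,
      coeff_coeff_succ_wSeries, uSeries, coeff_mk, coeff_mk, coeff_mk, coeff_mk,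
      uCoeff_succ_sub_uCoeff, coeff_X]
    congr 1
    split_ifs <;> simp_all [coeff_one]

theorem uSeries_eq : uSeries = -C X * (1 - uSeries) * (X + (1 - X) * uSeries) := by
  have hW := one_sub_X_mul_uSeries
  have hX : (1 - X : ℚ⟦X⟧⟦X⟧) ≠ 0 := fun h => by simpa using congrArg constantCoeff h
  apply mul_left_cancel₀ hX
  calc (1 - X) * uSeries = wSeries - X := hW
    _ = -C X * (1 - wSeries) * wSeries := by linear_combination wSeries_eq
    _ = -C X * ((1 - X) * (1 - uSeries)) * (X + (1 - X) * uSeries) := by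
      rw [show (1 - X) * (1 - uSeries) = 1 - wSeries by linear_combination -hW,
        show X + (1 - X) * uSeries = wSeries by linear_combination hW]
    _ = (1 - X) * (-C X * (1 - uSeries) * (X + (1 - X) * uSeries)) := by ring

theorem exists_eq_neg_X_mul_and_coeffQT_eq_uCoeff :
    ∃ u : MvPowerSeries (Fin 2) ℚ,
      u = -MvPowerSeries.X 0 * (1 - u) * (MvPowerSeries.X 1 + (1 - MvPowerSeries.X 1) * u) ∧
        ∀ n k, coeffQT n k u = uCoeff n k := by
  refine ⟨(qtEquiv ℚ).symm uSeries, (qtEquiv ℚ).injective ?_, fun n k => ?_⟩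
  · simpa using uSeries_eq
  · rw [← coeff_coeff_qtEquiv, AlgEquiv.apply_symm_apply, uSeries, coeff_mk, coeff_mk]

/-- There is a unique formal power series `u ∈ ℚ[[q,t]]` with
`u = -q·(1-u)·(t+(1-t)·u)`; its coefficient of `q^n t^k` is
`((-1)^(n+k+1)/n)·C(n+k,k-1)·C(n,k)` for `n, k ≥ 1`, and `0` if `n = 0` or `k = 0`. -/
theorem stmt0 :
    (∃! u : MvPowerSeries (Fin 2) ℚ,
        u = -(MvPowerSeries.X 0) * (1 - u) * (MvPowerSeries.X 1 + (1 - MvPowerSeries.X 1) * u)) ∧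
    ∀ u : MvPowerSeries (Fin 2) ℚ,
      u = -(MvPowerSeries.X 0) * (1 - u) * (MvPowerSeries.X 1 + (1 - MvPowerSeries.X 1) * u) →
        (∀ n k : ℕ, 1 ≤ n → 1 ≤ k →
          coeffQT n k u =
            ((-1 : ℚ) ^ (n + k + 1) / (n : ℚ)) *
              ((n + k).choose (k - 1) : ℚ) * (n.choose k : ℚ)) ∧
        (∀ n k : ℕ, n = 0 ∨ k = 0 → coeffQT n k u = 0) := by
  obtain ⟨U, hU, hcoeff⟩ := exists_eq_neg_X_mul_and_coeffQT_eq_uCoeff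
  refine ⟨⟨U, hU, fun v hv => MvPowerSeries.eq_of_eq_neg_X_mul_one_sub_mul 0 1 hv hU⟩,
    fun u hu => ?_⟩
  obtain rfl := MvPowerSeries.eq_of_eq_neg_X_mul_one_sub_mul 0 1 hu hU
  exact ⟨fun n k hn hk => (hcoeff n k).trans (if_pos ⟨hn, hk⟩),
    fun n k h => (hcoeff n k).trans (if_neg (by omega))⟩
end

section
/- Let u ∈ ℚ[[q,t]] be the unique formal power series satisfying u = −q·(1−u)·(t + (1−t)·u). For j = 1, 2 let U_j ∈ ℚ[[q]] be the one-variable power series whose coefficient of q^n equals the coefficient of q^n t^j in u. Then (1+q)·U₁ = −q and (1+q)³·U₂ = −q²·(2+q) as identities in ℚ[[q]]. (Equivalently, after the substitution t = 1−y, one has u = (1−y)·(−q/(1+q)) + (1−y)²·(−q²(2+q)/(1+q)³) + O((1−y)³).) -/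
/-- The one-variable series whose coefficient of `q^n` is the coefficient of
`q^n t^j` in `u`. -/
noncomputable def sliceT (j : ℕ) (u : MvPowerSeries (Fin 2) ℚ) : PowerSeries ℚ :=
  PowerSeries.mk fun n => coeffQT n j u

namespace PowerSeries

variable {R : Type*} [CommRing R]

lemma eq_zero_of_eq_X_mul_mul {f g : R⟦X⟧} (h : f = X * g * f) : f = 0 := by
  have hunit : IsUnit (1 - X * g) := by
    rw [isUnit_iff_constantCoeff]
    simp
  exact hunit.mul_right_eq_zero.mp (by linear_combination h)

lemma coeff_one_and_two_of_eq_neg_C_X_mul {T : PowerSeries R⟦X⟧}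
    (hT : T = -C X * (1 - T) * (X + (1 - X) * T)) :
    (1 + X) * coeff 1 T = -X ∧ (1 + X) * coeff 2 T = X * coeff 1 T * (2 + coeff 1 T) := by
  have hT0 : constantCoeff T = 0 := by
    refine eq_zero_of_eq_X_mul_mul (g := -(1 - constantCoeff T)) ?_
    conv_lhs => rw [hT]
    simp only [map_mul, map_neg, map_sub, map_add, map_one, constantCoeff_C, constantCoeff_X]
    ring
  obtain ⟨V, rfl⟩ := X_dvd_iff.mpr hT0
  have hV : V = -C X * (1 - X * V) * (1 + (1 - X) * V) :=
    X_mul_cancel (by linear_combination hT)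
  have h0 : coeff 0 V = -X * (1 + coeff 0 V) := by
    conv_lhs => rw [hV]
    simp [coeff_zero_eq_constantCoeff_apply]
  have h1 : coeff 1 V = -X * (coeff 1 V - 2 * coeff 0 V - coeff 0 V ^ 2) := by
    have hV' : V = C (-X) * (1 + V - X * (2 * V + V ^ 2) + X ^ 2 * V ^ 2) := by
      rw [map_neg]
      linear_combination hV
    conv_lhs => rw [hV', coeff_C_mul]
    simp only [map_add, map_sub, map_mul, map_pow, map_ofNat, coeff_one, one_ne_zero,
      ↓reduceIte, zero_add, add_zero, coeff_succ_X_mul, coeff_zero_eq_constantCoeff_apply,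
      coeff_X_pow_mul', Nat.not_ofNat_le_one]
    ring
  simp only [coeff_succ_X_mul]
  exact ⟨by linear_combination h0, by linear_combination h1⟩

end PowerSeries

def fin2EquivOptionUnit : Fin 2 ≃ Option Unit where
  toFun i := if i = 0 then some () else none
  invFun o := o.elim 1 fun _ => 0
  left_inv := by decide
  right_inv := by decide

section tExpansion

variable (R : Type*) [CommSemiring R]

/-- `t = X 1` becomes the outer variable and `q = X 0` the variable of the coefficients. -/
noncomputable def tExpansion : MvPowerSeries (Fin 2) R ≃ₐ[R] PowerSeries (PowerSeries R) :=
  (MvPowerSeries.renameEquiv R fin2EquivOptionUnit).trans (MvPowerSeries.optionEquivLeft Unit R)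

lemma tExpansion_apply (f : MvPowerSeries (Fin 2) R) :
    tExpansion R f =
      MvPowerSeries.optionEquivLeft Unit R (MvPowerSeries.rename fin2EquivOptionUnit f) :=
  rfl

@[simp]
lemma tExpansion_X_zero : tExpansion R (MvPowerSeries.X 0) = PowerSeries.C PowerSeries.X := by
  rw [tExpansion_apply, MvPowerSeries.rename_X]
  exact MvPowerSeries.optionEquivLeft_X_some ()

@[simp]
lemma tExpansion_X_one : tExpansion R (MvPowerSeries.X 1) = PowerSeries.X := by
  rw [tExpansion_apply, MvPowerSeries.rename_X]
  exact MvPowerSeries.optionEquivLeft_X_none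

end tExpansion

lemma coeff_tExpansion (u : MvPowerSeries (Fin 2) ℚ) (j : ℕ) :
    PowerSeries.coeff j (tExpansion ℚ u) = sliceT j u := by
  ext n
  have hexponent : (Finsupp.single () n).optionElim j =
      (Finsupp.single (0 : Fin 2) n + Finsupp.single 1 j).embDomain
        fin2EquivOptionUnit.toEmbedding := by
    ext (_ | _) <;> simp [fin2EquivOptionUnit]
  rw [sliceT, PowerSeries.coeff_mk, coeffQT, PowerSeries.coeff, tExpansion_apply,
    MvPowerSeries.coeff_coeff_optionEquivLeft, hexponent]
  exact MvPowerSeries.coeff_embDomain_rename _ _ _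

/-- For the unique solution `u` of `u = -q(1-u)(t+(1-t)u)`, the coefficients of
`t¹` and `t²` satisfy `(1+q)·U₁ = -q` and `(1+q)³·U₂ = -q²(2+q)`. -/
theorem stmt1 (u : MvPowerSeries (Fin 2) ℚ)
    (hu : u = -(MvPowerSeries.X 0) * (1 - u) *
        (MvPowerSeries.X 1 + (1 - MvPowerSeries.X 1) * u)) :
    (1 + PowerSeries.X) * sliceT 1 u = -PowerSeries.X ∧
    (1 + PowerSeries.X) ^ 3 * sliceT 2 u =
      -(PowerSeries.X ^ 2) * (2 + PowerSeries.X) := by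
  have hT : tExpansion ℚ u = -PowerSeries.C PowerSeries.X * (1 - tExpansion ℚ u) *
      (PowerSeries.X + (1 - PowerSeries.X) * tExpansion ℚ u) := by
    simpa using congrArg (tExpansion ℚ) hu
  obtain ⟨h1, h2⟩ := PowerSeries.coeff_one_and_two_of_eq_neg_C_X_mul hT
  simp only [coeff_tExpansion] at h1 h2
  refine ⟨h1, ?_⟩
  linear_combination (1 + PowerSeries.X) ^ 2 * h2 +
    PowerSeries.X * ((1 + PowerSeries.X) * sliceT 1 u + PowerSeries.X + 2) * h1
end

section
/- With notation as in the context (so H_1,…,H_N, 1−H̃_1,…,1−H̃_r is a list with multiplicity of the roots of z^N(1−z)^r = q, with q ≠ 0), one has the product identity ∏_{i=1}^N (1−H_i)^r = ∏_{j=1}^r (1−H̃_j)^N. -/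
/-!
Write `A = ∏ Hᵢ`, `B = ∏ (1 - Hᵢ)` and `D = ∏ (1 - H̃ⱼ)`. Multiplying the relations
`Hᵢ^N (1 - Hᵢ)^r = q` over `i` gives `A^N B^r = q^N`. Evaluating the factorisation at `0`
gives `A D = ± q`, hence `A^N D^N = q^N`. Since `q ≠ 0` we have `A ≠ 0`, and cancelling `A^N`
leaves `B^r = D^N`.
-/

open Polynomial Finset

section
variable {R : Type*} [CommRing R]

theorem pow_mul_one_sub_pow_eq_of_X_sub_C_dvd {N r : ℕ} {q a : R}
    (h : X - C a ∣ (X ^ N * (1 - X) ^ r - C q : R[X])) : a ^ N * (1 - a) ^ r = q := by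
  simpa [sub_eq_zero] using dvd_iff_isRoot.1 h

theorem eval_zero_prod_X_sub_C {ι : Type*} (s : Finset ι) (a : ι → R) :
    eval 0 (∏ i ∈ s, (X - C (a i))) = (-1) ^ #s * ∏ i ∈ s, a i := by
  simp [eval_prod, prod_neg]

theorem neg_one_pow_sq (n : ℕ) : ((-1 : R) ^ n) ^ 2 = 1 := by
  rw [← pow_mul, pow_mul', neg_one_sq, one_pow]

end

theorem stmt3_general (N r : ℕ) (hN : 1 ≤ N) (q : ℂ) (hq : q ≠ 0)
    (H : Fin N → ℂ) (Ht : Fin r → ℂ)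
    (hroots : (X ^ N * (1 - X) ^ r - C q : ℂ[X]) =
      (-1) ^ r * (∏ i, (X - C (H i))) * ∏ j, (X - C (1 - Ht j))) :
    ∏ i, (1 - H i) ^ r = ∏ j, (1 - Ht j) ^ N := by
  have hH (i : Fin N) : H i ^ N * (1 - H i) ^ r = q := by
    refine pow_mul_one_sub_pow_eq_of_X_sub_C_dvd (hroots ▸ ?_)
    exact (dvd_prod_of_mem _ (mem_univ i)).mul_left _ |>.mul_right _
  have hA : (∏ i, H i) ^ N * (∏ i, (1 - H i)) ^ r = q ^ N := by
    simp [← prod_pow, ← prod_mul_distrib, hH]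
  have h0 : (∏ i, H i) * ∏ j, (1 - Ht j) = (-1) ^ (N + 1) * q := by
    have h := congrArg (eval 0) hroots
    simp only [eval_mul, eval_sub, eval_pow, eval_X, eval_C, eval_one, eval_neg,
      eval_zero_prod_X_sub_C, zero_pow (by omega : N ≠ 0), card_univ, Fintype.card_fin] at h
    linear_combination (-(-1) ^ N) * h - ((∏ i, H i) * ∏ j, (1 - Ht j)) * neg_one_pow_sq (R := ℂ) r
      - ((∏ i, H i) * (∏ j, (1 - Ht j)) * ((-1) ^ r) ^ 2) * neg_one_pow_sq (R := ℂ) N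
  have hB : (∏ i, H i) ^ N * (∏ j, (1 - Ht j)) ^ N = q ^ N := by
    rw [← mul_pow, h0, mul_pow, ← pow_mul', (Nat.even_mul_succ_self N).neg_one_pow, one_mul]
  have hAN : (∏ i, H i) ^ N ≠ 0 := by
    rintro h
    rw [h, zero_mul] at hA
    exact pow_ne_zero N hq hA.symm
  rw [prod_pow, prod_pow]
  exact mul_left_cancel₀ hAN (hA.trans hB.symm)

/-- If `H_1, …, H_N, 1-H̃_1, …, 1-H̃_r` is a list with multiplicity of the roots of
`z^N (1-z)^r = q` with `q ≠ 0`, then `∏ (1-H_i)^r = ∏ (1-H̃_j)^N`. -/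
theorem stmt3 (N r : ℕ) (hN : 1 ≤ N) (hr : 1 ≤ r) (q : ℂ) (hq : q ≠ 0)
    (H : Fin N → ℂ) (Ht : Fin r → ℂ)
    (hroots : (X ^ N * (1 - X) ^ r - C q : ℂ[X]) =
      (-1) ^ r * (∏ i, (X - C (H i))) * ∏ j, (X - C (1 - Ht j))) :
    ∏ i, (1 - H i) ^ r = ∏ j, (1 - Ht j) ^ N :=
  stmt3_general N r hN q hq H Ht hroots
end

section
/- With notation as in the context, assume in addition that H_1,…,H_N are pairwise distinct and H̃_1,…,H̃_r are pairwise distinct. Then ∏_{i=1}^N (N/H_i − r/(1−H_i)) · ∏_{i=1}^N H_i^N · ∏_{i=1}^N (1−H_i)^{−r} · ∏_{i≠i'} (H_{i} − H_{i'})^{−1} = ∏_{j=1}^r (r/H̃_j − N/(1−H̃_j)) · ∏_{j=1}^r H̃_j^r · ∏_{j=1}^r (1−H̃_j)^{−N} · ∏_{j≠j'} (H̃_{j} − H̃_{j'})^{−1}, where the products over i≠i' and j≠j' run over ordered pairs of distinct indices. -/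
/-!
Differentiating `z^N (1-z)^r - q` at the root `Hᵢ` gives
`q (N/Hᵢ - r/(1-Hᵢ)) = (-1)^r ∏_{i' ≠ i} (Hᵢ - H_{i'}) ∏ⱼ (Hᵢ + H̃ⱼ - 1)`, and `(1-Hᵢ)^{-r} = Hᵢ^N / q`.
Hence the left-hand side equals `(-1)^{rN} ∏_{i,j} (Hᵢ + H̃ⱼ - 1) (∏ᵢ Hᵢ^N / q^N)^2`.
The substitution `z ↦ 1 - z` exchanges the roles of `(N, H)` and `(r, H̃)`, so the right-hand side
has the same shape, and comparing constant terms of the factorization shows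
`(∏ᵢ Hᵢ^N / q^N)^2 = (∏ⱼ H̃ⱼ^r / q^r)^2`.
-/

open Polynomial Finset Lagrange

section

variable {K : Type*} [Field K]

theorem Lagrange.eval_derivative_C_mul_nodal_mul_at_node {ι : Type*} [DecidableEq ι]
    {s : Finset ι} {v : ι → K} {i : ι} (hi : i ∈ s) (c : K) (g : K[X]) :
    eval (v i) (derivative (C c * (nodal s v * g))) =
      c * eval (v i) (derivative (nodal s v)) * eval (v i) g := by
  rw [derivative_C_mul, derivative_mul, eval_mul, eval_C, eval_add, eval_mul, eval_mul,
    eval_nodal_at_node hi, zero_mul, add_zero, mul_assoc]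

theorem eval_derivative_X_pow_mul_one_sub_X_pow_sub_C (N r : ℕ) (q : K) {x : K} (hx₀ : x ≠ 0)
    (hx₁ : 1 - x ≠ 0) :
    eval x (derivative (X ^ N * (1 - X) ^ r - C q)) =
      x ^ N * (1 - x) ^ r * (N / x - r / (1 - x)) := by
  simp only [derivative_sub, derivative_mul, derivative_pow, derivative_C,
    derivative_one, derivative_X, eval_sub, eval_add, eval_mul, eval_pow, eval_X, eval_C,
    eval_one]
  rcases N with _ | N <;> rcases r with _ | r <;> simp <;> field_simp <;> ring

theorem neg_one_pow_mul_prod_mul_eq {ι : Type*} [Fintype ι] (r : ℕ) (v : ι → K) (g : K[X]) :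
    (-1) ^ r * (∏ i, (X - C (v i))) * g = C ((-1) ^ r) * (nodal univ v * g) := by
  rw [nodal, mul_assoc, C_pow, C_neg, C_1]

section Factorization

variable {ι : Type*} [Fintype ι] {N r : ℕ} {q c : K} {v : ι → K} {g : K[X]}

theorem pow_mul_one_sub_pow_eq_of_eq_nodal
    (hP : X ^ N * (1 - X) ^ r - C q = C c * (nodal univ v * g)) (i : ι) :
    v i ^ N * (1 - v i) ^ r = q := by
  have h := congrArg (eval (v i)) hP
  simp only [eval_sub, eval_mul, eval_pow, eval_X, eval_one, eval_C,
    eval_nodal_at_node (mem_univ i), zero_mul, mul_zero] at h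
  exact sub_eq_zero.mp h

theorem mul_nodalWeight_eq_of_eq_nodal [DecidableEq ι] (hN : N ≠ 0) (hr : r ≠ 0) (hq : q ≠ 0)
    (hv : Function.Injective v) (hP : X ^ N * (1 - X) ^ r - C q = C c * (nodal univ v * g))
    (i : ι) :
    (N / v i - r / (1 - v i)) * v i ^ N * ((1 - v i) ^ r)⁻¹ * nodalWeight univ v i =
      c * eval (v i) g * (v i ^ N / q) ^ 2 := by
  have hroot := pow_mul_one_sub_pow_eq_of_eq_nodal hP i
  have hv₀ : v i ≠ 0 := by rintro h; simp [h, hN, hq.symm] at hroot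
  have hv₁ : 1 - v i ≠ 0 := by rintro h; simp [h, hr, hq.symm] at hroot
  have hw := nodalWeight_ne_zero hv.injOn (mem_univ i)
  rw [nodalWeight_eq_eval_derivative_nodal (mem_univ i)] at hw ⊢
  rw [Ne, inv_eq_zero] at hw
  have hderiv := congrArg (fun p => eval (v i) (derivative p)) hP
  simp only [eval_derivative_X_pow_mul_one_sub_X_pow_sub_C N r q hv₀ hv₁, hroot,
    eval_derivative_C_mul_nodal_mul_at_node (mem_univ i)] at hderiv
  have hA : (N / v i - r / (1 - v i) : K) =
      c * eval (v i) (derivative (nodal univ v)) * eval (v i) g / q := by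
    rw [← hderiv]; field_simp
  rw [hA, ← hroot]
  field_simp

end Factorization

/-- The paper's `𝖬*`. -/
def segreM (N r : ℕ) (H : Fin N → K) : K :=
  (∏ i, ((N : K) / H i - (r : K) / (1 - H i))) * (∏ i, H i ^ N) *
    (∏ i, ((1 - H i) ^ r)⁻¹) * (∏ i, ∏ i' ∈ univ \ {i}, (H i - H i')⁻¹)

variable {N r : ℕ} {q : K} {H : Fin N → K} {Ht : Fin r → K}

theorem segreM_eq (hN : N ≠ 0) (hr : r ≠ 0) (hq : q ≠ 0)
    (hroots : (X ^ N * (1 - X) ^ r - C q : K[X]) =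
      (-1) ^ r * (∏ i, (X - C (H i))) * ∏ j, (X - C (1 - Ht j)))
    (hH : Function.Injective H) :
    segreM N r H =
      (-1) ^ (r * N) * (∏ i, ∏ j, (H i - (1 - Ht j))) * ((∏ i, H i ^ N) / q ^ N) ^ 2 := by
  have hP := hroots.trans (neg_one_pow_mul_prod_mul_eq r H _)
  simp_rw [segreM, sdiff_singleton_eq_erase, ← nodalWeight.eq_1, ← prod_mul_distrib,
    mul_nodalWeight_eq_of_eq_nodal hN hr hq hH hP]
  simp only [prod_mul_distrib, prod_const, card_univ, Fintype.card_fin, eval_prod, eval_sub,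
    eval_X, eval_C, div_pow, prod_div_distrib, prod_pow, ← pow_mul]
  ring

theorem X_pow_mul_one_sub_X_pow_sub_C_swap
    (hroots : (X ^ N * (1 - X) ^ r - C q : K[X]) =
      (-1) ^ r * (∏ i, (X - C (H i))) * ∏ j, (X - C (1 - Ht j))) :
    (X ^ r * (1 - X) ^ N - C q : K[X]) =
      (-1) ^ N * (∏ j, (X - C (Ht j))) * ∏ i, (X - C (1 - H i)) := by
  have h := congrArg (fun p => p.comp (1 - X)) hroots
  have hX (a : K) : (1 - X - C a : K[X]) = -(X - C (1 - a)) := by rw [C_sub, C_1]; ring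
  simp only [sub_comp, mul_comp, pow_comp, Polynomial.prod_comp, X_comp, C_comp, one_comp,
    hX, prod_neg, card_univ, Fintype.card_fin, neg_comp, sub_sub_cancel] at h
  have hs : ((-1 : K[X]) ^ r) * (-1) ^ r = 1 := by rw [← mul_pow, neg_one_mul, neg_neg, one_pow]
  rw [mul_comm, h]
  linear_combination ((-1) ^ N * (∏ i, (X - C (1 - H i))) * ∏ j, (X - C (Ht j))) * hs

theorem sq_prod_pow_mul_sq_prod_one_sub_pow (hN : N ≠ 0)
    (hroots : (X ^ N * (1 - X) ^ r - C q : K[X]) =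
      (-1) ^ r * (∏ i, (X - C (H i))) * ∏ j, (X - C (1 - Ht j))) :
    (∏ i, H i ^ N) ^ 2 * (∏ j, (1 - Ht j) ^ N) ^ 2 = (q ^ N) ^ 2 := by
  have h := congrArg (fun p => (eval 0 p) ^ 2) hroots
  simp only [eval_sub, eval_mul, eval_pow, eval_X, eval_one, eval_C, eval_neg, eval_prod, map_sub,
    map_one, zero_pow hN, sub_zero, zero_sub, one_pow, mul_one, neg_sub, even_two, Even.neg_pow,
    mul_pow, ← prod_pow] at h
  rw [pow_right_comm, neg_one_sq, one_pow, one_mul] at h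
  simp only [sub_sq_comm _ (1 : K), prod_pow] at h
  rw [← pow_mul, mul_comm N 2, pow_mul, h]
  simp only [prod_pow]
  ring

theorem sq_prod_pow_div_pow_eq (hN : N ≠ 0) (hq : q ≠ 0)
    (hroots : (X ^ N * (1 - X) ^ r - C q : K[X]) =
      (-1) ^ r * (∏ i, (X - C (H i))) * ∏ j, (X - C (1 - Ht j))) :
    ((∏ i, H i ^ N) / q ^ N) ^ 2 = ((∏ j, Ht j ^ r) / q ^ r) ^ 2 := by
  have hHt : (∏ j, Ht j ^ r) * ∏ j, (1 - Ht j) ^ N = q ^ r := by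
    have hP := (X_pow_mul_one_sub_X_pow_sub_C_swap hroots).trans
      (neg_one_pow_mul_prod_mul_eq N Ht _)
    simp only [← prod_mul_distrib, pow_mul_one_sub_pow_eq_of_eq_nodal hP, prod_const, card_univ,
      Fintype.card_fin]
  have hconst := sq_prod_pow_mul_sq_prod_one_sub_pow hN hroots
  rw [div_pow, div_pow, div_eq_div_iff (by positivity) (by positivity)]
  linear_combination (∏ j, Ht j ^ r) ^ 2 * hconst -
    (∏ i, H i ^ N) ^ 2 * (q ^ r + (∏ j, Ht j ^ r) * ∏ j, (1 - Ht j) ^ N) * hHt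

end

/-- The identity `𝖬* = 𝖬̃*`: with `H_1, …, H_N, 1-H̃_1, …, 1-H̃_r` the roots (with
multiplicity) of `z^N (1-z)^r = q`, `q ≠ 0`, and both tuples pairwise distinct,
`∏ᵢ (N/Hᵢ - r/(1-Hᵢ)) · ∏ᵢ Hᵢ^N · ∏ᵢ (1-Hᵢ)^{-r} · ∏_{i≠i'} (Hᵢ-Hᵢ')⁻¹`
equals the analogous expression with the roles of `(N, H)` and `(r, H̃)` exchanged. -/
theorem stmt4 (N r : ℕ) (hN : 1 ≤ N) (hr : 1 ≤ r) (q : ℂ) (hq : q ≠ 0)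
    (H : Fin N → ℂ) (Ht : Fin r → ℂ)
    (hroots : (X ^ N * (1 - X) ^ r - C q : ℂ[X]) =
      (-1) ^ r * (∏ i, (X - C (H i))) * ∏ j, (X - C (1 - Ht j)))
    (hHinj : Function.Injective H) (hHtinj : Function.Injective Ht) :
    (∏ i, ((N : ℂ) / H i - (r : ℂ) / (1 - H i))) * (∏ i, H i ^ N) *
        (∏ i, ((1 - H i) ^ r)⁻¹) *
        (∏ i, ∏ i' ∈ univ \ {i}, (H i - H i')⁻¹) =
      (∏ j, ((r : ℂ) / Ht j - (N : ℂ) / (1 - Ht j))) * (∏ j, Ht j ^ r) *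
        (∏ j, ((1 - Ht j) ^ N)⁻¹) *
        (∏ j, ∏ j' ∈ univ \ {j}, (Ht j - Ht j')⁻¹) := by
  have hN : N ≠ 0 := Nat.one_le_iff_ne_zero.mp hN
  have hr : r ≠ 0 := Nat.one_le_iff_ne_zero.mp hr
  have hcross : ∏ i, ∏ j, (H i - (1 - Ht j)) = ∏ j, ∏ i, (Ht j - (1 - H i)) := by
    rw [prod_comm]
    exact prod_congr rfl fun _ _ => prod_congr rfl fun _ _ => by ring
  change segreM N r H = segreM r N Ht
  rw [segreM_eq hN hr hq hroots hHinj,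
    segreM_eq hr hN hq (X_pow_mul_one_sub_X_pow_sub_C_swap hroots) hHtinj,
    sq_prod_pow_div_pow_eq hN hq hroots, hcross, mul_comm r N]
end

section
/- With notation as in the context, let f′(z) = N z^{N−1}(1−z)^r − r z^N (1−z)^{r−1} be the derivative of f(z) = z^N(1−z)^r − q. Then ∏_{i=1}^N f′(H_i) = ∏_{i≠i'} (H_i − H_{i'}) · ∏_{i=1}^N ∏_{j=1}^r (1 − H_i − H̃_j), where the first product on the right runs over ordered pairs of distinct indices i, i' ∈ {1,…,N}. -/
/-! Differentiate the factorisation of `z^N (1-z)^r - q` and evaluate at `H i`: since `H i` is a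
root of `∏ₖ (X - H k)`, the product rule leaves only `∏_{k ≠ i} (H i - H k)` times the value at
`H i` of the remaining factor `(-1)^r ∏ⱼ (X - (1 - H̃ j))`, which is `∏ⱼ (1 - H i - H̃ j)`. -/

open Polynomial Finset

theorem Polynomial.eval_derivative_mul_of_isRoot {R : Type*} [CommRing R] {p q : R[X]} {a : R}
    (hp : p.IsRoot a) : eval a (derivative (p * q)) = eval a (derivative p) * eval a q := by
  simp [derivative_mul, hp.eq_zero]

theorem Polynomial.eval_derivative_prod_X_sub_C {R ι : Type*} [CommRing R] [Fintype ι]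
    [DecidableEq ι] (v : ι → R) (i : ι) :
    eval (v i) (derivative (∏ k, (X - C (v k)))) = ∏ k ∈ univ.erase i, (v i - v k) := by
  rw [← Lagrange.nodal_eq, Lagrange.eval_nodal_derivative_eval_node_eq (mem_univ i),
    Lagrange.eval_nodal]

theorem Polynomial.eval_derivative_X_pow_mul_one_sub_X_pow {R : Type*} [CommRing R]
    (N r : ℕ) (x : R) :
    eval x (derivative (X ^ N * (1 - X) ^ r : R[X])) =
      N * x ^ (N - 1) * (1 - x) ^ r - r * x ^ N * (1 - x) ^ (r - 1) := by
  simp only [derivative_mul, derivative_pow, derivative_sub, derivative_one, derivative_X,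
    eval_add, eval_mul, eval_pow, eval_sub, eval_C, eval_zero, eval_one, eval_X]
  ring

theorem stmt5_general (N r : ℕ) (q : ℂ)
    (H : Fin N → ℂ) (Ht : Fin r → ℂ)
    (hroots : (X ^ N * (1 - X) ^ r - C q : ℂ[X]) =
      (-1) ^ r * (∏ i, (X - C (H i))) * ∏ j, (X - C (1 - Ht j))) :
    ∏ i, ((N : ℂ) * H i ^ (N - 1) * (1 - H i) ^ r -
        (r : ℂ) * H i ^ N * (1 - H i) ^ (r - 1)) =
      (∏ i, ∏ i' ∈ univ \ {i}, (H i - H i')) * ∏ i, ∏ j, (1 - H i - Ht j) := by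
  rw [← prod_mul_distrib]
  refine prod_congr rfl fun i _ => ?_
  have hroot : (∏ k, (X - C (H k))).IsRoot (H i) := by
    simp only [IsRoot, eval_prod, eval_sub, eval_X, eval_C]
    exact prod_eq_zero (mem_univ i) (sub_self _)
  have hfactor : ((-1) ^ r * (∏ k, (X - C (H k))) * ∏ j, (X - C (1 - Ht j)) : ℂ[X]) =
      (∏ k, (X - C (H k))) * ((-1) ^ r * ∏ j, (X - C (1 - Ht j))) := by ring
  have hderiv := congrArg (fun f => eval (H i) (derivative f)) (hroots.trans hfactor)
  simp only [derivative_sub, derivative_C, sub_zero] at hderiv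
  rw [eval_derivative_X_pow_mul_one_sub_X_pow, eval_derivative_mul_of_isRoot hroot,
    eval_derivative_prod_X_sub_C] at hderiv
  rw [hderiv, sdiff_singleton_eq_erase]
  congr 1
  have hneg (j : Fin r) : 1 - H i - Ht j = -(H i - (1 - Ht j)) := by ring
  simp only [eval_mul, eval_pow, eval_neg, eval_one, eval_prod, eval_sub, eval_X, eval_C, hneg,
    prod_neg, card_univ, Fintype.card_fin]

/-- With `H_1, …, H_N, 1-H̃_1, …, 1-H̃_r` the roots (with multiplicity) of
`f(z) = z^N (1-z)^r - q = 0`, `q ≠ 0`, one has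
`∏ᵢ f'(Hᵢ) = ∏_{i≠i'} (Hᵢ - Hᵢ') · ∏_{i,j} (1 - Hᵢ - H̃ⱼ)`. -/
theorem stmt5 (N r : ℕ) (hN : 1 ≤ N) (hr : 1 ≤ r) (q : ℂ) (hq : q ≠ 0)
    (H : Fin N → ℂ) (Ht : Fin r → ℂ)
    (hroots : (X ^ N * (1 - X) ^ r - C q : ℂ[X]) =
      (-1) ^ r * (∏ i, (X - C (H i))) * ∏ j, (X - C (1 - Ht j))) :
    ∏ i, ((N : ℂ) * H i ^ (N - 1) * (1 - H i) ^ r -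
        (r : ℂ) * H i ^ N * (1 - H i) ^ (r - 1)) =
      (∏ i, ∏ i' ∈ univ \ {i}, (H i - H i')) * ∏ i, ∏ j, (1 - H i - Ht j) :=
  stmt5_general N r q H Ht hroots
end

section
/- With notation as in the context (z_1,…,z_N the pairwise distinct roots of z^N − q(z−1)^N, with q ≠ 0, 1), one has N^N · ∏_{i=1}^N z_i^{N−1} · ∏_{i≠j} (1−z_j) = ∏_{i≠j} (z_i − z_j), where both products over i≠j run over ordered pairs of distinct indices in {1,…,N}. Equivalently, ∏_i z_i^N · ∏_{i≠j} (1−z_j)/(z_i−z_j) · ∏_i (N/z_i) = 1. -/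
/-!
Write `f = X^N - q (X - 1)^N = (1 - q) ∏ⱼ (X - zⱼ)`. At a root `z` of `f` one has
`(1 - z) f'(z) = N z^{N-1}`, while `f'(zᵢ) = (1 - q) ∏_{j ≠ i} (zᵢ - zⱼ)`. Multiplying over `i`
and absorbing the factors `1 - zᵢ` into `∏ᵢ ∏_{j ≠ i} (1 - zⱼ)` leaves the extra factor
`((1 - q) ∏ⱼ (1 - zⱼ))^N`, which is `f(1)^N = 1`.
-/

open Polynomial Finset

theorem one_sub_mul_eval_derivative_of_pow_eq {R : Type*} [CommRing R] (N : ℕ) {q z : R}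
    (hz : z ^ N = q * (z - 1) ^ N) :
    (1 - z) * (derivative (X ^ N - C q * (X - 1) ^ N : R[X])).eval z = N * z ^ (N - 1) := by
  cases N with
  | zero => simp
  | succ M =>
    simp only [derivative_sub, derivative_mul, derivative_C, derivative_pow,
      derivative_X, derivative_one, zero_mul, zero_add, sub_zero, mul_one, eval_sub, eval_mul,
      eval_pow, eval_C, eval_X, eval_one, Nat.add_sub_cancel]
    linear_combination -((M + 1 : ℕ) : R) * hz

theorem stmt6_general (N : ℕ) (q : ℂ) (z : Fin N → ℂ)
    (hroots : (X ^ N - C q * (X - 1) ^ N : ℂ[X]) =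
      C (1 - q) * ∏ i, (X - C (z i))) :
    (N : ℂ) ^ N * (∏ i, z i ^ (N - 1)) *
        (∏ i, ∏ j ∈ univ \ {i}, (1 - z j)) =
      ∏ i, ∏ j ∈ univ \ {i}, (z i - z j) := by
  simp only [sdiff_singleton_eq_erase]
  have hderiv (i : Fin N) : (1 - q) * (∏ j ∈ univ.erase i, (z i - z j)) * (1 - z i) =
      N * z i ^ (N - 1) := by
    have hroot : z i ^ N = q * (z i - 1) ^ N := by
      simpa [sub_eq_zero, eval_prod, prod_eq_zero (mem_univ i)] using
        congrArg (eval (z i)) hroots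
    rw [← one_sub_mul_eval_derivative_of_pow_eq N hroot, hroots, derivative_C_mul, eval_C_mul,
      ← Lagrange.nodal_eq, Lagrange.eval_nodal_derivative_eval_node_eq (mem_univ i),
      Lagrange.eval_nodal]
    ring
  have hone : ((1 - q) * ∏ i, (1 - z i)) ^ N = 1 := by
    have h1 : 1 - q * 0 ^ N = (1 - q) * ∏ i, (1 - z i) := by
      simpa [eval_prod] using congrArg (eval 1) hroots
    rw [← h1]
    cases N <;> simp
  calc (N : ℂ) ^ N * (∏ i, z i ^ (N - 1)) * ∏ i, ∏ j ∈ univ.erase i, (1 - z j)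
      = ∏ i, ((1 - q) * (∏ j ∈ univ.erase i, (z i - z j)) *
          ((1 - z i) * ∏ j ∈ univ.erase i, (1 - z j))) := by
        simp_rw [← mul_assoc, hderiv, prod_mul_distrib, prod_const, card_univ, Fintype.card_fin]
    _ = ((1 - q) * ∏ i, (1 - z i)) ^ N * ∏ i, ∏ j ∈ univ.erase i, (z i - z j) := by
        simp_rw [fun i => mul_prod_erase univ (fun j => 1 - z j) (mem_univ i), prod_mul_distrib,
          prod_const, card_univ, Fintype.card_fin, mul_pow]
        ring
    _ = ∏ i, ∏ j ∈ univ.erase i, (z i - z j) := by rw [hone, one_mul]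

/-- With `z_1, …, z_N` the pairwise distinct roots of `z^N - q(z-1)^N` (`q ≠ 0, 1`),
one has `N^N · ∏ᵢ zᵢ^{N-1} · ∏_{i≠j} (1-z_j) = ∏_{i≠j} (zᵢ - z_j)`. -/
theorem stmt6 (N : ℕ) (hN : 1 ≤ N) (q : ℂ) (hq0 : q ≠ 0) (hq1 : q ≠ 1)
    (z : Fin N → ℂ) (hinj : Function.Injective z)
    (hroots : (X ^ N - C q * (X - 1) ^ N : ℂ[X]) =
      C (1 - q) * ∏ i, (X - C (z i))) :
    (N : ℂ) ^ N * (∏ i, z i ^ (N - 1)) *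
        (∏ i, ∏ j ∈ univ \ {i}, (1 - z j)) =
      ∏ i, ∏ j ∈ univ \ {i}, (z i - z j) :=
  stmt6_general N q z hroots
end

section
/- With notation as in the context (z_1,…,z_N the pairwise distinct roots of z^N − q(z−1)^N, with q ≠ 0, 1), for every index i ∈ {1,…,N} one has (1−q) · z_i · ∏_{i'≠i} (z_i − z_{i'})(z_{i'} − z_i) = −N² · q · z_i^{N−1} · (1−z_i)^{N−1} · ∏_{i'≠i} (1−z_{i'}). Equivalently, (z_i^{1−N}/N) · ∏_{i'≠i} [(z_i−z_{i'})(z_{i'}−z_i)] / [(1−z_i)(1−z_{i'})] = −Nq/((1−q)·z_i). -/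
open Polynomial Finset

/-!
Write `P = X^N - q (X-1)^N = (1-q) ∏ⱼ (X - zⱼ)`. Evaluating at `1` gives
`(1-q)(1-zᵢ) ∏_{j≠i} (1-zⱼ) = 1`, and evaluating `P'` at the root `zᵢ`, multiplied by `1 - zᵢ`
and simplified with `zᵢ^N = q (zᵢ-1)^N`, gives `(1-q)(1-zᵢ) ∏_{j≠i} (zᵢ-zⱼ) = N zᵢ^{N-1}`.
Since `∏_{j≠i} (zᵢ-zⱼ)(zⱼ-zᵢ) = (-1)^{N-1} (∏_{j≠i} (zᵢ-zⱼ))²`, both sides of the identity become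
explicit after multiplying by `(1-q)(1-zᵢ)²`.
-/

theorem Finset.prod_sub_mul_sub_swap {ι R : Type*} [CommRing R] (s : Finset ι) (a : R)
    (b : ι → R) :
    ∏ j ∈ s, ((a - b j) * (b j - a)) = (-1) ^ #s * (∏ j ∈ s, (a - b j)) ^ 2 := by
  rw [← prod_pow, ← prod_const, ← prod_mul_distrib]
  exact prod_congr rfl fun j _ => by ring

section RootsOfPowSubMulSubOnePow

variable {K ι : Type*} [Field K] [Fintype ι] {N : ℕ} {q : K} {z : ι → K}

theorem pow_eq_mul_sub_one_pow_of_roots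
    (h : (X ^ N - C q * (X - 1) ^ N : K[X]) = C (1 - q) * ∏ j, (X - C (z j))) (i : ι) :
    z i ^ N = q * (z i - 1) ^ N := by
  have hi := congrArg (eval (z i)) h
  rw [← Lagrange.nodal_eq, eval_mul, Lagrange.eval_nodal_at_node (mem_univ i), mul_zero] at hi
  simpa [sub_eq_zero] using hi

variable [DecidableEq ι]

theorem one_sub_mul_one_sub_mul_prod_erase_of_roots (hN : N ≠ 0)
    (h : (X ^ N - C q * (X - 1) ^ N : K[X]) = C (1 - q) * ∏ j, (X - C (z j))) (i : ι) :
    (1 - q) * ((1 - z i) * ∏ j ∈ univ.erase i, (1 - z j)) = 1 := by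
  have h1 := congrArg (eval 1) h
  rw [← Lagrange.nodal_eq, eval_mul, eval_C, Lagrange.eval_nodal] at h1
  simp only [eval_sub, eval_mul, eval_pow, eval_X, eval_C, eval_one, one_pow, sub_self,
    zero_pow hN, mul_zero, sub_zero] at h1
  rw [mul_prod_erase univ (fun j => 1 - z j) (mem_univ i), ← h1]

theorem eval_derivative_of_roots
    (h : (X ^ N - C q * (X - 1) ^ N : K[X]) = C (1 - q) * ∏ j, (X - C (z j))) (i : ι) :
    N * z i ^ (N - 1) - q * (N * (z i - 1) ^ (N - 1)) =
      (1 - q) * ∏ j ∈ univ.erase i, (z i - z j) := by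
  have hi := congrArg (fun p => eval (z i) (derivative p)) h
  simp only [← Lagrange.nodal_eq, derivative_mul, derivative_C, zero_mul, zero_add, eval_mul,
    eval_C, Lagrange.eval_nodal_derivative_eval_node_eq (mem_univ i), Lagrange.eval_nodal] at hi
  rw [← hi]
  simp [derivative_pow]

theorem one_sub_mul_prod_erase_mul_one_sub_of_roots (hN : N ≠ 0)
    (h : (X ^ N - C q * (X - 1) ^ N : K[X]) = C (1 - q) * ∏ j, (X - C (z j))) (i : ι) :
    (1 - q) * (∏ j ∈ univ.erase i, (z i - z j)) * (1 - z i) = N * z i ^ (N - 1) := by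
  obtain ⟨n, rfl⟩ := Nat.exists_eq_add_one_of_ne_zero hN
  rw [← eval_derivative_of_roots h i, Nat.add_sub_cancel]
  push_cast
  linear_combination (-((n : K) + 1)) * pow_eq_mul_sub_one_pow_of_roots h i

theorem one_sub_mul_mul_sq_prod_erase_of_roots (hN : N ≠ 0)
    (h : (X ^ N - C q * (X - 1) ^ N : K[X]) = C (1 - q) * ∏ j, (X - C (z j))) (i : ι) :
    (1 - q) * z i * (-1) ^ (N - 1) * (∏ j ∈ univ.erase i, (z i - z j)) ^ 2 =
      -N ^ 2 * q * z i ^ (N - 1) * (1 - z i) ^ (N - 1) * ∏ j ∈ univ.erase i, (1 - z j) := by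
  have hB := one_sub_mul_one_sub_mul_prod_erase_of_roots hN h i
  have hA := one_sub_mul_prod_erase_mul_one_sub_of_roots hN h i
  have hroot := pow_eq_mul_sub_one_pow_of_roots h i
  have hsign : (1 - z i) ^ N = (-1) ^ N * (z i - 1) ^ N := by rw [← neg_sub (z i) 1, neg_pow]
  have hne : (1 - q) * (1 - z i) ^ 2 ≠ 0 :=
    mul_ne_zero (left_ne_zero_of_mul_eq_one hB)
      (pow_ne_zero 2 (left_ne_zero_of_mul (right_ne_zero_of_mul_eq_one hB)))
  apply mul_left_cancel₀ hne
  set A := ∏ j ∈ univ.erase i, (z i - z j)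
  set w := z i
  obtain ⟨n, rfl⟩ := Nat.exists_eq_add_one_of_ne_zero hN
  simp only [Nat.add_sub_cancel] at hA ⊢
  push_cast at hA ⊢
  linear_combination (w * (-1) ^ n * ((1 - q) * A * (1 - w) + ((n : K) + 1) * w ^ n)) * hA
    + (((n : K) + 1) ^ 2 * q * w ^ n * (1 - w) ^ (n + 1)) * hB
    + (((n : K) + 1) ^ 2 * w ^ n * q) * hsign - (((n : K) + 1) ^ 2 * w ^ n * (-1) ^ (n + 1)) * hroot

end RootsOfPowSubMulSubOnePow

theorem stmt7_general (N : ℕ) (q : ℂ)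
    (z : Fin N → ℂ)
    (hroots : (X ^ N - C q * (X - 1) ^ N : ℂ[X]) =
      C (1 - q) * ∏ i, (X - C (z i)))
    (i : Fin N) :
    (1 - q) * z i * ∏ i' ∈ univ \ {i}, ((z i - z i') * (z i' - z i)) =
      -(N : ℂ) ^ 2 * q * z i ^ (N - 1) * (1 - z i) ^ (N - 1) *
        ∏ i' ∈ univ \ {i}, (1 - z i') := by
  rw [sdiff_singleton_eq_erase, prod_sub_mul_sub_swap, card_erase_of_mem (mem_univ i),
    card_univ, Fintype.card_fin, ← mul_assoc]
  exact one_sub_mul_mul_sq_prod_erase_of_roots i.pos.ne' hroots i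

/-- With `z_1, …, z_N` the pairwise distinct roots of `z^N - q(z-1)^N` (`q ≠ 0, 1`),
for every index `i` one has
`(1-q)·zᵢ·∏_{i'≠i} (zᵢ-zᵢ')(zᵢ'-zᵢ) = -N²·q·zᵢ^{N-1}·(1-zᵢ)^{N-1}·∏_{i'≠i} (1-zᵢ')`. -/
theorem stmt7 (N : ℕ) (hN : 1 ≤ N) (q : ℂ) (hq0 : q ≠ 0) (hq1 : q ≠ 1)
    (z : Fin N → ℂ) (hinj : Function.Injective z)
    (hroots : (X ^ N - C q * (X - 1) ^ N : ℂ[X]) =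
      C (1 - q) * ∏ i, (X - C (z i)))
    (i : Fin N) :
    (1 - q) * z i * ∏ i' ∈ univ \ {i}, ((z i - z i') * (z i' - z i)) =
      -(N : ℂ) ^ 2 * q * z i ^ (N - 1) * (1 - z i) ^ (N - 1) *
        ∏ i' ∈ univ \ {i}, (1 - z i') :=
  stmt7_general N q z hroots i
end

section
/- Let R be a commutative ring and g ∈ R[[x]] a formal power series with constant coefficient 1. Then there is a unique formal power series h ∈ R[[q]] with zero constant term satisfying h = q·g(h), and for every n ≥ 0 the coefficient of q^n in the formal derivative h′ of h equals the coefficient of x^n in g(x)^{n+1}. -/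
open PowerSeries

/-- Substitution `g(h)` of a power series `h` with zero constant term into a power
series `g`: the coefficient of `q^m` is `∑_{n ≤ m} (coeff n g) · (coeff m (h^n))`
(only finitely many terms contribute since `h` has zero constant term). -/
noncomputable def substPS {R : Type*} [CommRing R] (h g : PowerSeries R) : PowerSeries R :=
  PowerSeries.mk fun m =>
    ∑ n ∈ Finset.range (m + 1), PowerSeries.coeff n g * PowerSeries.coeff m (h ^ n)

/-!
Let `v = g⁻¹`. Since `g(h)·v(h) = 1`, the equation `h = X·g(h)` is equivalent to
`(X·v)(h) = X`, so its solutions are exactly the compositional inverses of `X·v`; one exists,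
and it is unique, because the linear coefficient of `X·v` is a unit.

For the coefficients write `h = X·u` with `u = g(h)`, and `w = v(h) = u⁻¹`. Then
`h' = g^{n+1}(h)·w^{n+1}·h'`, and expanding `g^{n+1}(h)` in powers of `h` reduces `[X^n]` of the
right-hand side to the numbers `[X^k](w^{k+1}·(X·u)')`, which are `1` for `k = 0` and `0`
otherwise. For `k ≥ 1` this is the residue identity `[X^k] w^k = [X^{k-1}] w^{k-1}·w'`, which
follows from `(w^k)' = k·w^{k-1}·w'` after cancelling `k` in the universal ring `ℤ[b₀, b₁, …]`.
-/

open Finset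

namespace PowerSeries

variable {R : Type*} [CommRing R]

lemma coeff_pow_eq_zero_of_lt {h : R⟦X⟧} (h0 : constantCoeff h = 0) {m d : ℕ} (hmd : m < d) :
    coeff m (h ^ d) = 0 := by
  obtain ⟨k, rfl⟩ : X ∣ h := X_dvd_iff.mpr h0
  rw [mul_pow, coeff_X_pow_mul', if_neg (by omega)]

lemma coeff_subst_eq_sum_range {h : R⟦X⟧} (h0 : constantCoeff h = 0) (G : R⟦X⟧) {m n : ℕ}
    (hmn : m ≤ n) :
    coeff m (G.subst h) = ∑ d ∈ range (n + 1), coeff d G * coeff m (h ^ d) := by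
  rw [coeff_subst' (HasSubst.of_constantCoeff_zero' h0)]
  refine finsum_eq_sum_of_support_subset _ fun d hd => ?_
  by_contra hdn
  rw [coe_range, Set.mem_Iio, not_lt] at hdn
  exact hd (by simp only [coeff_pow_eq_zero_of_lt h0 (by omega : m < d), smul_zero])

lemma substPS_eq_subst {h : R⟦X⟧} (h0 : constantCoeff h = 0) (g : R⟦X⟧) :
    substPS h g = g.subst h := by
  ext m
  rw [substPS, coeff_mk, coeff_subst_eq_sum_range h0 g le_rfl]

lemma coeff_subst_mul {h : R⟦X⟧} (h0 : constantCoeff h = 0) (G Z : R⟦X⟧) (n : ℕ) :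
    coeff n (G.subst h * Z) = ∑ d ∈ range (n + 1), coeff d G * coeff n (h ^ d * Z) := by
  simp_rw [coeff_mul, mul_sum, ← mul_assoc]
  rw [sum_comm]
  refine sum_congr rfl fun p hp => ?_
  rw [coeff_subst_eq_sum_range h0 G (HasAntidiagonal.antidiagonal.fst_le hp), sum_mul]

lemma subst_mul_subst_eq_one {g v h : R⟦X⟧} (hgv : g * v = 1) (hh : HasSubst h) :
    g.subst h * v.subst h = 1 := by
  rw [← subst_mul hh, hgv, ← coe_substAlgHom hh, map_one]

lemma eq_substInvOfIsUnit_of_subst_eq_X {P h : R⟦X⟧} (hP : constantCoeff P = 0)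
    (hP' : IsUnit (coeff 1 P)) (hh : HasSubst h) (hPh : P.subst h = X) :
    h = P.substInvOfIsUnit hP' := by
  conv_lhs => rw [← subst_X (R := R) hh, ← subst_substInvOfIsUnit_left P hP hP',
    subst_comp_subst_apply (HasSubst.of_constantCoeff_zero' hP) hh, hPh, X_subst]

lemma eq_X_mul_subst_iff {g v h : R⟦X⟧} (hgv : g * v = 1) (hh : HasSubst h) :
    h = X * g.subst h ↔ (X * v).subst h = X := by
  have huw := subst_mul_subst_eq_one hgv hh
  rw [subst_mul hh, subst_X hh]
  constructor <;> intro heq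
  · linear_combination (v.subst h) * heq + X * huw
  · linear_combination (g.subst h) * heq - h * huw

theorem existsUnique_eq_X_mul_subst {g : R⟦X⟧} (hg : IsUnit (constantCoeff g)) :
    ∃! h : R⟦X⟧, constantCoeff h = 0 ∧ h = X * g.subst h := by
  obtain ⟨v, hgv⟩ := (isUnit_iff_constantCoeff.mpr hg).exists_right_inv
  have hP : constantCoeff (X * v) = 0 := by simp
  have hP' : IsUnit (coeff 1 (X * v)) := by
    rw [coeff_succ_X_mul, coeff_zero_eq_constantCoeff_apply]
    exact IsUnit.of_mul_eq_one_right (constantCoeff g) (by rw [← map_mul, hgv, map_one])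
  refine ⟨(X * v).substInvOfIsUnit hP', ⟨constantCoeff_substInvOfIsUnit _ hP',
    (eq_X_mul_subst_iff hgv (HasSubst.substInvOfIsUnit _ hP')).mpr
      (subst_substInvOfIsUnit_right _ hP hP')⟩, fun h ⟨h0, heq⟩ => ?_⟩
  have hh := HasSubst.of_constantCoeff_zero' h0
  exact eq_substInvOfIsUnit_of_subst_eq_X hP hP' hh ((eq_X_mul_subst_iff hgv hh).mp heq)

lemma map_derivative {S : Type*} [CommRing S] (σ : R →+* S) (f : R⟦X⟧) :
    map σ (d⁄dX R f) = d⁄dX S (map σ f) := by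
  ext n
  simp [coeff_derivative]

lemma coeff_succ_pow_succ_eq_coeff_pow_mul_derivative_of_isAddTorsionFree [IsAddTorsionFree R]
    (g : R⟦X⟧) (n : ℕ) :
    coeff (n + 1) (g ^ (n + 1)) = coeff n (g ^ n * d⁄dX R g) := by
  have hcoeff := coeff_derivative (g ^ (n + 1)) n
  rw [derivative_pow, Nat.add_sub_cancel, mul_assoc, ← map_natCast (C (R := R)), coeff_C_mul]
    at hcoeff
  apply nsmul_right_injective n.succ_ne_zero
  simp only [nsmul_eq_mul, Nat.succ_eq_add_one, Nat.cast_add_one] at hcoeff ⊢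
  rw [mul_comm, hcoeff]

lemma coeff_succ_pow_succ_eq_coeff_pow_mul_derivative (g : R⟦X⟧) (n : ℕ) :
    coeff (n + 1) (g ^ (n + 1)) = coeff n (g ^ n * d⁄dX R g) := by
  let G : (MvPolynomial ℕ ℤ)⟦X⟧ := mk MvPolynomial.X
  let σ : MvPolynomial ℕ ℤ →+* R := MvPolynomial.eval₂Hom (Int.castRingHom R) (coeff · g)
  have hG : map σ G = g := by
    ext i
    simp [G, σ]
  rw [← hG, ← map_pow, coeff_map,
    coeff_succ_pow_succ_eq_coeff_pow_mul_derivative_of_isAddTorsionFree, ← coeff_map, map_mul,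
    map_pow, map_derivative]

lemma coeff_pow_succ_mul_derivative_X_mul {u w : R⟦X⟧} (huw : u * w = 1) (k : ℕ) :
    coeff k (w ^ (k + 1) * d⁄dX R (X * u)) = if k = 0 then 1 else 0 := by
  have hd : d⁄dX R (X * u) = u + X * d⁄dX R u := by
    rw [Derivation.leibniz, derivative_X, smul_eq_mul, smul_eq_mul]
    ring
  have hdw : u * d⁄dX R w + w * d⁄dX R u = 0 := by
    simpa [Derivation.leibniz, smul_eq_mul] using congrArg (d⁄dX R) huw
  rcases k with _ | s
  · rw [hd, zero_add, pow_one, coeff_zero_eq_constantCoeff_apply]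
    simp [mul_add, mul_comm w u, huw]
  · have : w ^ (s + 2) * d⁄dX R (X * u) = w ^ (s + 1) - X * (w ^ s * d⁄dX R w) := by
      rw [hd]
      linear_combination (w ^ (s + 1) - X * w ^ s * d⁄dX R w) * huw + X * w ^ (s + 1) * hdw
    rw [this, map_sub, coeff_succ_X_mul, coeff_succ_pow_succ_eq_coeff_pow_mul_derivative,
      sub_self, if_neg s.succ_ne_zero]

lemma coeff_subst_mul_pow_mul_derivative {h u w : R⟦X⟧} (hXu : h = X * u) (huw : u * w = 1)
    (G : R⟦X⟧) (n : ℕ) :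
    coeff n (G.subst h * (w ^ (n + 1) * d⁄dX R h)) = coeff n G := by
  subst hXu
  rw [coeff_subst_mul (by simp)]
  have hterm : ∀ d ≤ n, coeff n ((X * u) ^ d * (w ^ (n + 1) * d⁄dX R (X * u))) =
      if d = n then 1 else 0 := by
    intro d hdn
    obtain ⟨k, rfl⟩ := Nat.exists_eq_add_of_le hdn
    have : (X * u) ^ d * (w ^ (d + k + 1) * d⁄dX R (X * u)) =
        X ^ d * (w ^ (k + 1) * d⁄dX R (X * u)) := by
      calc _ = X ^ d * ((u * w) ^ d * (w ^ (k + 1) * d⁄dX R (X * u))) := by ring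
        _ = _ := by rw [huw, one_pow, one_mul]
    rw [this, coeff_X_pow_mul', if_pos (Nat.le_add_right d k), Nat.add_sub_cancel_left,
      coeff_pow_succ_mul_derivative_X_mul huw]
    simp
  rw [sum_congr rfl fun d hd => by rw [hterm d (Nat.lt_succ_iff.mp (mem_range.mp hd))]]
  simp

end PowerSeries

/-- Lagrange–Bürmann: if `g` has constant coefficient `1`, there is a unique `h`
with zero constant term satisfying `h = q·g(h)`, and the coefficient of `q^n` in
the formal derivative `h'` equals the coefficient of `x^n` in `g(x)^{n+1}`. -/
theorem stmt8 (R : Type*) [CommRing R] (g : PowerSeries R)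
    (hg : PowerSeries.constantCoeff g = 1) :
    (∃! h : PowerSeries R,
        PowerSeries.constantCoeff h = 0 ∧ h = PowerSeries.X * substPS h g) ∧
    ∀ h : PowerSeries R, PowerSeries.constantCoeff h = 0 →
      h = PowerSeries.X * substPS h g →
      ∀ n : ℕ, PowerSeries.coeff n h.derivativeFun =
        PowerSeries.coeff n (g ^ (n + 1)) := by
  have hg' : IsUnit (constantCoeff g) := hg ▸ isUnit_one
  refine ⟨?_, fun h h0 heq n => ?_⟩
  · refine (existsUnique_congr fun h => and_congr_right fun h0 => ?_).mpr
      (existsUnique_eq_X_mul_subst hg')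
    rw [substPS_eq_subst h0]
  · rw [substPS_eq_subst h0] at heq
    have hh := HasSubst.of_constantCoeff_zero' h0
    obtain ⟨v, hgv⟩ := (isUnit_iff_constantCoeff.mpr hg').exists_right_inv
    have huw := subst_mul_subst_eq_one hgv hh
    calc coeff n (d⁄dX R h)
        = coeff n ((g ^ (n + 1)).subst h * ((v.subst h) ^ (n + 1) * d⁄dX R h)) := by
          rw [subst_pow hh, ← mul_assoc, ← mul_pow, huw, one_pow, one_mul]
      _ = coeff n (g ^ (n + 1)) := coeff_subst_mul_pow_mul_derivative heq huw _ n
end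

section
/- Let R be a commutative ring and y ∈ R. There is a unique formal power series H ∈ R[[q]] with zero constant term satisfying H = −q·(1 + y·H²). Since 1 + y·H² has constant coefficient 1 it is invertible in R[[q]]; set A = (1 − y·H²)·(1 + y·H²)^{−2}. Then (2A − 1 + 4y·q²)² = 1 − 4y·q² as an identity in R[[q]]. -/
/-!
Substituting `H = -q·G` turns `H = -q·(1 + y·H²)` into the Catalan equation `G = 1 + y·q²·G²`,
so `H = -q·C(y·q²)` with `C` the Catalan series is a solution. Two solutions differ by some `D`
with `D = q·E·D`, so `D` is divisible by every power of `q` and vanishes.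

For the identity put `u = 1 + y·H²`. The equation gives `H² = q²·u²`, i.e. `y·q²·u² = u - 1`, and
then `2A - 1 + 4y·q² = (2 - u)/u`, whose square is `1 - 4(u - 1)/u² = 1 - 4y·q²`.
-/

open PowerSeries

section CommRing

variable {R : Type*} [CommRing R]

theorem subst_map_catalanSeries {a : R⟦X⟧} (ha : HasSubst a) :
    (catalanSeries.map (Nat.castRingHom R)).subst a =
      1 + a * (catalanSeries.map (Nat.castRingHom R)).subst a ^ 2 := by
  have h := congrArg (fun f => substAlgHom ha (f.map (Nat.castRingHom R)))
    catalanSeries_sq_mul_X_add_one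
  simp only [map_add, map_mul, map_pow, map_X, map_one, substAlgHom_X, coe_substAlgHom] at h
  linear_combination -h

theorem eq_zero_of_eq_X_mul_mul_self {D E : R⟦X⟧} (h : D = X * E * D) : D = 0 := by
  have hdvd (n : ℕ) : X ^ n ∣ D := by
    induction n with
    | zero => exact one_dvd D
    | succ n ih =>
      rw [h, pow_succ', mul_assoc]
      exact mul_dvd_mul_left X (dvd_mul_of_dvd_right ih E)
  ext n
  exact X_pow_dvd_iff.mp (hdvd (n + 1)) n n.lt_succ_self

theorem exists_eq_neg_X_mul_one_add_C_mul_sq (y : R) :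
    ∃ H : R⟦X⟧, H = -(X * (1 + C y * H ^ 2)) := by
  set G := (catalanSeries.map (Nat.castRingHom R)).subst (C y * X ^ 2)
  have hG : G = 1 + C y * X ^ 2 * G ^ 2 :=
    subst_map_catalanSeries (HasSubst.of_constantCoeff_zero' (by simp))
  refine ⟨-(X * G), ?_⟩
  linear_combination -X * hG

theorem eq_of_eq_neg_X_mul_one_add_C_mul_sq {y : R} {H K : R⟦X⟧}
    (hH : H = -(X * (1 + C y * H ^ 2))) (hK : K = -(X * (1 + C y * K ^ 2))) : H = K := by
  rw [← sub_eq_zero]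
  apply eq_zero_of_eq_X_mul_mul_self (E := -(C y * (H + K)))
  linear_combination hH - hK

theorem sq_two_mul_two_sub_mul_sq_sub_one_add_four_mul {u v w : R} (huv : u * v = 1)
    (hw : w * u ^ 2 = u - 1) :
    (2 * ((2 - u) * v ^ 2) - 1 + 4 * w) ^ 2 = 1 - 4 * w := by
  have hw' : w = (u - 1) * v ^ 2 := by linear_combination v ^ 2 * hw - w * (u * v + 1) * huv
  have hA : 2 * ((2 - u) * v ^ 2) - 1 + 4 * w = (2 - u) * v := by
    linear_combination (2 * v + 1) * huv + 4 * hw'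
  rw [hA, hw']
  linear_combination (u * v + 1) * huv

end CommRing

/-- There is a unique `H ∈ R[[q]]` with zero constant term satisfying
`H = -q·(1+y·H²)`; moreover, with `A = (1-y·H²)·(1+y·H²)^{-2}` one has
`(2A - 1 + 4y·q²)² = 1 - 4y·q²` in `R[[q]]`. -/
theorem stmt10 (R : Type*) [CommRing R] (y : R) :
    (∃! H : PowerSeries R,
        PowerSeries.constantCoeff H = 0 ∧
          H = -(PowerSeries.X * (1 + PowerSeries.C y * H ^ 2))) ∧
    ∀ H : PowerSeries R, PowerSeries.constantCoeff H = 0 →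
      H = -(PowerSeries.X * (1 + PowerSeries.C y * H ^ 2)) →
      (2 * ((1 - PowerSeries.C y * H ^ 2) *
            (PowerSeries.invOfUnit (1 + PowerSeries.C y * H ^ 2) 1) ^ 2) -
          1 + 4 * PowerSeries.C y * PowerSeries.X ^ 2) ^ 2 =
        1 - 4 * PowerSeries.C y * PowerSeries.X ^ 2 := by
  refine ⟨?_, fun H hc hH => ?_⟩
  · obtain ⟨H, hH⟩ := exists_eq_neg_X_mul_one_add_C_mul_sq y
    refine ⟨H, ⟨by rw [hH]; simp, hH⟩, fun K ⟨_, hK⟩ => ?_⟩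
    exact eq_of_eq_neg_X_mul_one_add_C_mul_sq hK hH
  · set u := 1 + C y * H ^ 2
    have huv : u * invOfUnit u 1 = 1 := mul_invOfUnit u 1 (by simp [u, hc])
    have hw : C y * X ^ 2 * u ^ 2 = u - 1 := by
      have hH2 : H ^ 2 = X ^ 2 * u ^ 2 := by rw [hH]; ring
      linear_combination -C y * hH2
    rw [show 1 - C y * H ^ 2 = 2 - u by ring, mul_assoc 4]
    exact sq_two_mul_two_sub_mul_sq_sub_one_add_four_mul huv hw
end

section
/- Let H ∈ ℚ[[q]] be the unique formal power series with zero constant term satisfying H = −q·(1 + H²), and set A = (1 − H²)·(1 + H²)^{−2} ∈ ℚ[[q]]. Then A is not a rational function of q: there do not exist polynomials p, s ∈ ℚ[X] with s ≠ 0 such that s(q)·A = p(q) holds in ℚ[[q]] (polynomials being regarded as power series in the evident way). -/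
/-!
Since `H = -q(1 + H²)`, we have `H² = q²(1 + H²)²`, and this makes `2A - (1 - 4q²)` a square
root of `1 - 4q²` in `ℚ⟦q⟧`. If `A` were rational, so would be this square root; but a square
`r² = (1 - 4q²) s²` of polynomials is impossible, since `1/2` is a simple root of `1 - 4q²` and
hence a root of odd multiplicity of the right-hand side, and of even multiplicity of the left.
-/

open PowerSeries
open scoped Polynomial

namespace Polynomial

@[simp, norm_cast]
theorem coe_ofNat {R : Type*} [Semiring R] (n : ℕ) [n.AtLeastTwo] :
    ((ofNat(n) : R[X]) : PowerSeries R) = ofNat(n) :=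
  map_ofNat coeToPowerSeries.ringHom n

theorem sq_ne_mul_sq_of_rootMultiplicity_eq_one {R : Type*} [CommRing R] [IsDomain R]
    {d : R[X]} {a : R} (hd : d.rootMultiplicity a = 1) (r : R[X]) {s : R[X]} (hs : s ≠ 0) :
    r ^ 2 ≠ d * s ^ 2 := by
  intro h
  have hd0 : d ≠ 0 := by rintro rfl; simp at hd
  have hds : d * s ^ 2 ≠ 0 := mul_ne_zero hd0 (pow_ne_zero 2 hs)
  have hr : r ^ 2 ≠ 0 := h ▸ hds
  have key := congrArg (rootMultiplicity a) h
  rw [rootMultiplicity_mul hds, sq, rootMultiplicity_mul (sq r ▸ hr), sq,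
    rootMultiplicity_mul (sq s ▸ pow_ne_zero 2 hs), hd] at key
  omega

theorem rootMultiplicity_one_sub_four_mul_X_sq {K : Type*} [Field K] (h2 : (2 : K) ≠ 0) :
    (1 - 4 * X ^ 2 : K[X]).rootMultiplicity 2⁻¹ = 1 := by
  have h4 : (4 : K[X]) * C 2⁻¹ ^ 2 = 1 := by
    rw [← map_ofNat C 4, ← C_pow, ← C_mul, ← C_1]
    congr 1
    field_simp
    norm_num
  have hfac : (1 - 4 * X ^ 2 : K[X]) = -4 * (X + C 2⁻¹) * (X - C 2⁻¹) ^ 1 := by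
    linear_combination -h4
  have hroot : ¬ (-4 * (X + C 2⁻¹) : K[X]).IsRoot 2⁻¹ := by
    have h4 : (4 : K) ≠ 0 := by
      rw [show (4 : K) = 2 * 2 by norm_num]
      exact mul_ne_zero h2 h2
    simpa [IsRoot, ← two_mul, h2] using h4
  rw [hfac, rootMultiplicity_mul_X_sub_C_pow (fun h => hroot (by simp [h])),
    rootMultiplicity_eq_zero hroot]

end Polynomial

namespace PowerSeries

theorem not_exists_coe_mul_eq_coe_of_sq_eq {R : Type*} [CommRing R] [IsDomain R] {f : R⟦X⟧}
    {d : R[X]} {a : R} (hd : d.rootMultiplicity a = 1) (hf : f ^ 2 = d) :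
    ¬ ∃ r s : R[X], s ≠ 0 ∧ (s : R⟦X⟧) * f = r := by
  rintro ⟨r, s, hs, h⟩
  apply Polynomial.sq_ne_mul_sq_of_rootMultiplicity_eq_one hd r hs
  apply Polynomial.coe_injective
  push_cast
  rw [← h, ← hf]
  ring

theorem sq_two_mul_sub_one_sub_four_mul_X_sq {K : Type*} [Field K] {H : K⟦X⟧}
    (hH0 : constantCoeff H = 0) (hH : H = -(X * (1 + H ^ 2))) :
    (2 * ((1 - H ^ 2) * ((1 + H ^ 2) ^ 2)⁻¹) - (1 - 4 * X ^ 2)) ^ 2 = 1 - 4 * X ^ 2 := by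
  have hV : (1 + H ^ 2) ^ 2 * ((1 + H ^ 2) ^ 2)⁻¹ = 1 :=
    PowerSeries.mul_inv_cancel _ (by simp [hH0])
  have hH2 : H ^ 2 = X ^ 2 * (1 + H ^ 2) ^ 2 := by
    linear_combination (H - X * (1 + H ^ 2)) * hH
  set V := ((1 + H ^ 2) ^ 2)⁻¹
  have hD : 1 - 4 * X ^ 2 = (1 - H ^ 2) ^ 2 * V := by
    linear_combination -(1 - 4 * X ^ 2) * hV + 4 * V * hH2
  rw [hD]
  linear_combination (1 - H ^ 2) ^ 2 * V * hV

end PowerSeries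

/-- For the unique `H ∈ ℚ[[q]]` with zero constant term satisfying
`H = -q·(1+H²)`, the series `A = (1-H²)·(1+H²)^{-2}` is not a rational function
of `q`: there are no polynomials `p, s` with `s ≠ 0` and `s(q)·A = p(q)`. -/
theorem stmt11 (H : PowerSeries ℚ)
    (hH0 : PowerSeries.constantCoeff H = 0)
    (hH : H = -(PowerSeries.X * (1 + H ^ 2))) :
    ¬ ∃ (p s : Polynomial ℚ), s ≠ 0 ∧
      (s : PowerSeries ℚ) * ((1 - H ^ 2) * ((1 + H ^ 2) ^ 2)⁻¹) =
        (p : PowerSeries ℚ) := by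
  rintro ⟨p, s, hs, hA⟩
  refine not_exists_coe_mul_eq_coe_of_sq_eq
    (f := 2 * ((1 - H ^ 2) * ((1 + H ^ 2) ^ 2)⁻¹) - (1 - 4 * X ^ 2))
    (Polynomial.rootMultiplicity_one_sub_four_mul_X_sq two_ne_zero) ?_
    ⟨2 * p - (1 - 4 * Polynomial.X ^ 2) * s, s, hs, ?_⟩
  · push_cast
    exact sq_two_mul_sub_one_sub_four_mul_X_sq hH0 hH
  · push_cast
    rw [← hA]
    ring
end
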